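/- arXiv:math/0311262 — 3 statements merged into one kernel-verified Lean document; each statement's English description precedes it below -/
import Mathlib

section
/- Let P be a finite bounded graded poset of rank n (all maximal chains of P have length n), and let a finite group G act on P by rank-preserving order automorphisms, inducing an action on chains of the proper part of P. Let λ be any chain-labelling of the quotient complex Δ(P)/G that assigns distinct labels to distinct faces with rank set {1,…,i} sharing the same face with rank set {1,…,i−1}. Then Δ(P)/G satisfies the crossing condition: whenever F_j and F_k are facets with the label word of F_j lexicographically strictly smaller than that of F_k, and σ is a common face of F_j and F_k whose rank set contains {1,…,r} but does not contain r+1 and contains at least one element greater than r+1 (letting s₁ be the least element of the rank set of σ exceeding r), and no common face of F_j and F_k has rank set containing {1,…,r+1}, then there exists a facet F_i whose label word is lexicographically strictly smaller than that of F_k and a common face τ of F_i and F_k whose rank set is {1,…,r} ∪ {s₁, s₁+1,…,n−1} and whose restriction to the rank set of σ equals σ. -/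
namespace Stmt1

variable {P G L : Type*}

/-- A chain in the proper part of a graded poset of rank `n`
(elements of rank `1,…,n-1`). -/
def ProperChain (rank : P → ℕ) (n : ℕ) [Preorder P] (c : Set P) : Prop :=
  IsChain (· ≤ ·) c ∧ ∀ x ∈ c, 1 ≤ rank x ∧ rank x ≤ n - 1

/-- The rank set of a chain. -/
def rankSet (rank : P → ℕ) (c : Set P) : Set ℕ := rank '' c

/-- The subchain of `c` consisting of its elements whose rank lies in `T`. -/
def restrict (rank : P → ℕ) (c : Set P) (T : Set ℕ) : Set P :=
  {x ∈ c | rank x ∈ T}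

/-- Two chains lie in the same `G`-orbit. -/
def OrbEq (G : Type*) [Group G] [MulAction G P] (c c' : Set P) : Prop :=
  ∃ g : G, (g • ·) '' c = c'

/-- A maximal chain of the proper part: one element of each rank `1,…,n-1`. -/
def MaxChain (rank : P → ℕ) (n : ℕ) [Preorder P] (c : Set P) : Prop :=
  ProperChain rank n c ∧ rankSet rank c = Set.Icc 1 (n - 1)

/-- The chain (orbit) `σ` is a face of the facet represented by the chain `c`:
the orbit of `σ` equals the orbit of the subchain of `c` with the same rank set. -/
def IsFaceOf (G : Type*) [Group G] [MulAction G P] (rank : P → ℕ)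
    (σ c : Set P) : Prop :=
  OrbEq G (restrict rank c (rankSet rank σ)) σ

/-- The label word of a facet: its `i`-th letter is the label of the face with
rank set `{1,…,i}`. -/
def word (rank : P → ℕ) (lab : Set P → L) (c : Set P) : ℕ → L :=
  fun i => lab (restrict rank c (Set.Icc 1 i))

/-- Lexicographic comparison of label words `w, w'` of length `N`. -/
def LexLt [LinearOrder L] (N : ℕ) (w w' : ℕ → L) : Prop :=
  ∃ i, 1 ≤ i ∧ i ≤ N ∧ (∀ j, 1 ≤ j → j < i → w j = w' j) ∧ w i < w' i

section Aux

lemma restrict_restrict' (rank : P → ℕ) (c : Set P) (T S : Set ℕ) :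
    restrict rank (restrict rank c T) S = restrict rank c (T ∩ S) := by
  ext x; simp only [restrict, Set.mem_setOf_eq, Set.mem_inter_iff]; tauto

lemma restrict_of_subset (rank : P → ℕ) (c : Set P) {T S : Set ℕ} (h : S ⊆ T) :
    restrict rank (restrict rank c T) S = restrict rank c S := by
  rw [restrict_restrict', Set.inter_eq_self_of_subset_right h]

lemma restrict_subset (rank : P → ℕ) (c : Set P) (T : Set ℕ) :
    restrict rank c T ⊆ c := fun _ hx => hx.1

lemma restrict_union_sets (rank : P → ℕ) (c : Set P) (T S : Set ℕ) :
    restrict rank c (T ∪ S) = restrict rank c T ∪ restrict rank c S := by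
  ext x; simp only [restrict, Set.mem_setOf_eq, Set.mem_union]; tauto

lemma restrict_union_chains (rank : P → ℕ) (a b : Set P) (T : Set ℕ) :
    restrict rank (a ∪ b) T = restrict rank a T ∪ restrict rank b T := by
  ext x; simp only [restrict, Set.mem_setOf_eq, Set.mem_union]; tauto

lemma rankSet_restrict (rank : P → ℕ) (c : Set P) (T : Set ℕ) :
    rankSet rank (restrict rank c T) = rankSet rank c ∩ T := by
  ext t
  constructor
  · rintro ⟨x, ⟨hx, hr⟩, rfl⟩; exact ⟨⟨x, hx, rfl⟩, hr⟩
  · rintro ⟨⟨x, hx, rfl⟩, ht⟩; exact ⟨x, ⟨hx, ht⟩, rfl⟩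

variable [Group G] [MulAction G P]

lemma image_smul_image (g g' : G) (c : Set P) :
    (g • ·) '' ((g' • ·) '' c) = ((g * g') • ·) '' c := by
  rw [← Set.image_comp]
  funext x
  simp [mul_smul]

lemma orbEq_refl (c : Set P) : OrbEq G c c := ⟨1, by simp⟩

lemma of_smul_eq {g : G} {c c' : Set P} (h : (g • ·) '' c = c') :
    c = (g⁻¹ • ·) '' c' := by
  rw [← h, image_smul_image]; simp

lemma orbEq_symm {c c' : Set P} (h : OrbEq G c c') : OrbEq G c' c := by
  obtain ⟨g, rfl⟩ := h
  exact ⟨g⁻¹, by rw [image_smul_image]; simp⟩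

lemma orbEq_trans {a b c : Set P} (h : OrbEq G a b) (h' : OrbEq G b c) : OrbEq G a c := by
  obtain ⟨g, rfl⟩ := h; obtain ⟨g', rfl⟩ := h'
  exact ⟨g' * g, (image_smul_image _ _ _).symm⟩

lemma smul_restrict (rank : P → ℕ) (hG_rank : ∀ (g : G) (x : P), rank (g • x) = rank x)
    (g : G) (c : Set P) (T : Set ℕ) :
    (g • ·) '' (restrict rank c T) = restrict rank ((g • ·) '' c) T := by
  ext y
  constructor
  · rintro ⟨x, ⟨hx, hr⟩, rfl⟩
    exact ⟨⟨x, hx, rfl⟩, by simpa [hG_rank] using hr⟩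
  · rintro ⟨⟨x, hx, rfl⟩, hr⟩
    exact ⟨x, ⟨hx, by rw [hG_rank] at hr; exact hr⟩, rfl⟩

lemma properChain_subset [Preorder P] {rank : P → ℕ} {n : ℕ} {c d : Set P}
    (hc : ProperChain rank n c) (hd : d ⊆ c) : ProperChain rank n d :=
  ⟨hc.1.mono hd, fun x hx => hc.2 x (hd hx)⟩

lemma chain_le [PartialOrder P] {rank : P → ℕ}
    (hstrict : ∀ x y : P, x < y → rank x < rank y) {c : Set P} (hc : IsChain (· ≤ ·) c)
    {x y : P} (hx : x ∈ c) (hy : y ∈ c) (h : rank x ≤ rank y) : x ≤ y := by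
  rcases eq_or_ne x y with rfl | hne
  · exact le_refl x
  rcases hc hx hy hne with h' | h'
  · exact h'
  · rcases lt_or_eq_of_le h' with h'' | h''
    · exact absurd (hstrict y x h'') (by omega)
    · exact le_of_eq h''.symm

lemma maxChain_smul [PartialOrder P] {rank : P → ℕ} {n : ℕ}
    (hG_order : ∀ (g : G) (x y : P), x ≤ y ↔ g • x ≤ g • y)
    (hG_rank : ∀ (g : G) (x : P), rank (g • x) = rank x)
    (g : G) {c : Set P} (hc : MaxChain rank n c) : MaxChain rank n ((g • ·) '' c) := by
  refine ⟨⟨?_, ?_⟩, ?_⟩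
  · rintro _ ⟨x, hx, rfl⟩ _ ⟨y, hy, rfl⟩ hne
    have hxy : x ≠ y := fun h => hne (by rw [h])
    rcases hc.1.1 hx hy hxy with h | h
    · exact Or.inl ((hG_order g x y).mp h)
    · exact Or.inr ((hG_order g y x).mp h)
  · rintro _ ⟨x, hx, rfl⟩
    simpa [hG_rank] using hc.1.2 x hx
  · rw [← hc.2]
    unfold rankSet
    rw [Set.image_image]
    simp only [hG_rank]

end Aux

theorem quotient_complex_crossing_condition
    [PartialOrder P] [BoundedOrder P] [Fintype P]
    [Group G] [Finite G] [MulAction G P] [LinearOrder L]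
    (n : ℕ) (rank : P → ℕ)
    -- `P` is graded of rank `n`:
    (hrank_bot : rank (⊥ : P) = 0) (hrank_top : rank (⊤ : P) = n)
    (hrank_strict : ∀ x y : P, x < y → rank x < rank y)
    (hrank_cov : ∀ x y : P, x ⋖ y → rank y = rank x + 1)
    -- `G` acts by rank-preserving order automorphisms:
    (hG_order : ∀ (g : G) (x y : P), x ≤ y ↔ g • x ≤ g • y)
    (hG_rank : ∀ (g : G) (x : P), rank (g • x) = rank x)
    -- `lab` is a chain-labelling of `Δ(P)/G`: well-defined on orbits, and
    -- distinct faces with rank set `{1,…,i}` sharing the same face with rank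
    -- set `{1,…,i-1}` get distinct labels:
    (lab : Set P → L)
    (hlab_inv : ∀ c c' : Set P, OrbEq G c c' → lab c = lab c')
    (hlab_dist : ∀ i : ℕ, 1 ≤ i → i ≤ n - 1 → ∀ c c' : Set P,
      ProperChain rank n c → ProperChain rank n c' →
      rankSet rank c = Set.Icc 1 i → rankSet rank c' = Set.Icc 1 i →
      ¬ OrbEq G c c' →
      OrbEq G (restrict rank c (Set.Icc 1 (i - 1)))
        (restrict rank c' (Set.Icc 1 (i - 1))) →
      lab c ≠ lab c') :
    -- the crossing condition:
    ∀ cj ck : Set P, MaxChain rank n cj → MaxChain rank n ck →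
      LexLt (n - 1) (word rank lab cj) (word rank lab ck) →
      ∀ (σ : Set P) (r s₁ : ℕ), ProperChain rank n σ →
        IsFaceOf G rank σ cj → IsFaceOf G rank σ ck →
        Set.Icc 1 r ⊆ rankSet rank σ →
        r + 1 ∉ rankSet rank σ →
        s₁ ∈ rankSet rank σ → r < s₁ →
        (∀ t ∈ rankSet rank σ, r < t → s₁ ≤ t) →
        (¬ ∃ τ : Set P, ProperChain rank n τ ∧ IsFaceOf G rank τ cj ∧
          IsFaceOf G rank τ ck ∧ Set.Icc 1 (r + 1) ⊆ rankSet rank τ) →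
        ∃ ci : Set P, MaxChain rank n ci ∧
          LexLt (n - 1) (word rank lab ci) (word rank lab ck) ∧
          ∃ τ : Set P, ProperChain rank n τ ∧
            IsFaceOf G rank τ ci ∧ IsFaceOf G rank τ ck ∧
            rankSet rank τ = Set.Icc 1 r ∪ Set.Icc s₁ (n - 1) ∧
            OrbEq G (restrict rank τ (rankSet rank σ)) σ := by
  intro cj ck hcj hck hlex σ r s₁ hσ hfj hfk hIcc hr1 hs₁ hrlt hmin hexτ
  set S := rankSet rank σ with hS
  obtain ⟨g, hg⟩ := hfj
  obtain ⟨h, hh⟩ := hfk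
  set u : G := h⁻¹ * g with hu
  set d : Set P := (u • ·) '' cj with hd
  have hcd : MaxChain rank n d := maxChain_smul hG_order hG_rank u hcj
  -- basic rank bounds
  have hσsub : ∀ t ∈ S, 1 ≤ t ∧ t ≤ n - 1 := by
    rintro t ⟨x, hx, rfl⟩; exact hσ.2 x hx
  have hs₁b : 1 ≤ s₁ ∧ s₁ ≤ n - 1 := hσsub s₁ hs₁
  have hrs : r + 1 < s₁ := by
    rcases Nat.lt_or_ge (r + 1) s₁ with h' | h'
    · exact h'
    · have he : s₁ = r + 1 := by omega
      exact absurd (he ▸ hs₁) hr1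
  have hr1n : r + 1 ≤ n - 1 := by omega
  -- the key equality: d agrees with ck on the ranks of σ
  have hkey : restrict rank d S = restrict rank ck S := by
    have h1 : restrict rank d S = (u • ·) '' restrict rank cj S :=
      (smul_restrict rank hG_rank u cj S).symm
    have h2 : (u • ·) '' restrict rank cj S
        = (h⁻¹ • ·) '' ((g • ·) '' restrict rank cj S) := by
      rw [image_smul_image]
    have h3 : restrict rank ck S = (h⁻¹ • ·) '' σ := of_smul_eq hh
    rw [h1, h2, hg, h3]
  -- restricts of d and cj are in the same orbit
  have horb_dj : ∀ T : Set ℕ, OrbEq G (restrict rank cj T) (restrict rank d T) :=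
    fun T => ⟨u, smul_restrict rank hG_rank u cj T⟩
  have hwd : ∀ j, word rank lab d j = word rank lab cj j := by
    intro j
    exact (hlab_inv _ _ (horb_dj (Set.Icc 1 j))).symm
  -- words of d and ck agree in positions 1..r
  have heq : ∀ j, j ≤ r → restrict rank d (Set.Icc 1 j) = restrict rank ck (Set.Icc 1 j) := by
    intro j hj
    have hsub : Set.Icc 1 j ⊆ S := fun t ht =>
      hIcc ⟨ht.1, le_trans ht.2 hj⟩
    calc restrict rank d (Set.Icc 1 j)
        = restrict rank (restrict rank d S) (Set.Icc 1 j) :=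
          (restrict_of_subset rank d hsub).symm
      _ = restrict rank (restrict rank ck S) (Set.Icc 1 j) := by rw [hkey]
      _ = restrict rank ck (Set.Icc 1 j) := restrict_of_subset rank ck hsub
  -- rank sets of initial restricts of maximal chains
  have hrsMax : ∀ c : Set P, MaxChain rank n c → ∀ i, i ≤ n - 1 →
      rankSet rank (restrict rank c (Set.Icc 1 i)) = Set.Icc 1 i := by
    intro c hc i hi
    rw [rankSet_restrict, hc.2]
    ext t
    simp only [Set.mem_inter_iff, Set.mem_Icc]
    omega
  -- labels of d and ck at position r+1 differ
  have hnorb : ¬ OrbEq G (restrict rank d (Set.Icc 1 (r + 1)))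
      (restrict rank ck (Set.Icc 1 (r + 1))) := by
    intro horb
    apply hexτ
    refine ⟨restrict rank d (Set.Icc 1 (r + 1)),
      properChain_subset hcd.1 (restrict_subset _ _ _), ?_, ?_, ?_⟩
    · unfold IsFaceOf
      rw [hrsMax d hcd (r + 1) hr1n]
      exact horb_dj _
    · unfold IsFaceOf
      rw [hrsMax d hcd (r + 1) hr1n]
      exact orbEq_symm horb
    · rw [hrsMax d hcd (r + 1) hr1n]
  have hne : lab (restrict rank d (Set.Icc 1 (r + 1)))
      ≠ lab (restrict rank ck (Set.Icc 1 (r + 1))) := by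
    apply hlab_dist (r + 1) (by omega) hr1n _ _
      (properChain_subset hcd.1 (restrict_subset _ _ _))
      (properChain_subset hck.1 (restrict_subset _ _ _))
      (hrsMax d hcd (r + 1) hr1n) (hrsMax ck hck (r + 1) hr1n) hnorb
    have : r + 1 - 1 = r := by omega
    rw [this, restrict_of_subset rank d (Set.Icc_subset_Icc_right (by omega)),
      restrict_of_subset rank ck (Set.Icc_subset_Icc_right (by omega)),
      heq r le_rfl]
    exact orbEq_refl _
  -- hence the lexicographic difference of d and ck occurs exactly at r+1
  have hlt : word rank lab d (r + 1) < word rank lab ck (r + 1) := by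
    obtain ⟨i, hi1, hiN, hag, hilt⟩ := hlex
    rcases lt_trichotomy i (r + 1) with hir | hir | hir
    · exfalso
      have : word rank lab cj i = word rank lab ck i := by
        rw [← hwd i]
        unfold word
        rw [heq i (by omega)]
      exact absurd this (ne_of_lt hilt)
    · rw [← hir, hwd i]
      exact hilt
    · exfalso
      apply hne
      have := hag (r + 1) (by omega) hir
      rw [← hwd (r + 1)] at this
      exact this
  -- the element of rank s₁ common to d and ck
  obtain ⟨z, hzck, hzr⟩ : ∃ z ∈ ck, rank z = s₁ := by
    have : s₁ ∈ rankSet rank ck := by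
      rw [hck.2]; exact ⟨hs₁b.1, hs₁b.2⟩
    obtain ⟨z, hz, hz'⟩ := this
    exact ⟨z, hz, hz'⟩
  have hzd : z ∈ d := by
    have : z ∈ restrict rank ck S := ⟨hzck, hzr ▸ hs₁⟩
    rw [← hkey] at this
    exact this.1
  -- the new facet: d below s₁, ck from s₁ on
  set A : Set P := restrict rank d (Set.Icc 1 (s₁ - 1)) with hA
  set B : Set P := restrict rank ck (Set.Icc s₁ (n - 1)) with hB
  set ci : Set P := A ∪ B with hci
  have hcross : ∀ x ∈ A, ∀ y ∈ B, x ≤ y := by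
    rintro x ⟨hxd, hxr⟩ y ⟨hyck, hyr⟩
    have hxz : x ≤ z := chain_le hrank_strict hcd.1.1 hxd hzd
      (by simp only [Set.mem_Icc] at hxr; omega)
    have hzy : z ≤ y := chain_le hrank_strict hck.1.1 hzck hyck
      (by simp only [Set.mem_Icc] at hyr; omega)
    exact le_trans hxz hzy
  have hciMax : MaxChain rank n ci := by
    refine ⟨⟨?_, ?_⟩, ?_⟩
    · rintro x (hx | hx) y (hy | hy) hne
      · exact hcd.1.1 hx.1 hy.1 hne
      · exact Or.inl (hcross x hx y hy)
      · exact Or.inr (hcross y hy x hx)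
      · exact hck.1.1 hx.1 hy.1 hne
    · rintro x (hx | hx)
      · exact hcd.1.2 x hx.1
      · exact hck.1.2 x hx.1
    · rw [hci]
      unfold rankSet
      rw [Set.image_union]
      show rankSet rank A ∪ rankSet rank B = _
      rw [hA, hB, rankSet_restrict, rankSet_restrict, hcd.2, hck.2]
      ext t
      simp only [Set.mem_union, Set.mem_inter_iff, Set.mem_Icc]
      omega
  -- restricts of ci at low ranks agree with d
  have hciLow : ∀ j, j ≤ s₁ - 1 →
      restrict rank ci (Set.Icc 1 j) = restrict rank d (Set.Icc 1 j) := by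
    intro j hj
    rw [hci, restrict_union_chains, hA, hB, restrict_restrict', restrict_restrict']
    have h1 : Set.Icc 1 (s₁ - 1) ∩ Set.Icc 1 j = Set.Icc 1 j := by
      ext t; simp only [Set.mem_inter_iff, Set.mem_Icc]; omega
    have h2 : restrict rank ck (Set.Icc s₁ (n - 1) ∩ Set.Icc 1 j) = ∅ := by
      ext x
      simp only [restrict, Set.mem_setOf_eq, Set.mem_inter_iff, Set.mem_Icc,
        Set.mem_empty_iff_false, iff_false, not_and]
      intro _; omega
    rw [h1, h2, Set.union_empty]
  -- lexicographic comparison of ci and ck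
  have hlex' : LexLt (n - 1) (word rank lab ci) (word rank lab ck) := by
    refine ⟨r + 1, by omega, hr1n, ?_, ?_⟩
    · intro j hj1 hj2
      show lab _ = lab _
      rw [hciLow j (by omega), heq j (by omega)]
    · show lab _ < lab _
      have := hciLow (r + 1) (by omega)
      unfold word at hlt
      rw [this]
      exact hlt
  -- the common face τ
  set T : Set ℕ := Set.Icc 1 r ∪ Set.Icc s₁ (n - 1) with hT
  set τ : Set P := restrict rank ck T with hτ
  have hrsτ : rankSet rank τ = T := by
    rw [hτ, rankSet_restrict, hck.2]
    ext t
    simp only [Set.mem_inter_iff, Set.mem_Icc, hT, Set.mem_union]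
    omega
  have hSsubT : S ⊆ T := by
    intro t ht
    rcases le_or_gt t r with h' | h'
    · exact Or.inl ⟨(hσsub t ht).1, h'⟩
    · exact Or.inr ⟨hmin t ht h', (hσsub t ht).2⟩
  have hrestτ : restrict rank ci T = τ := by
    rw [hci, restrict_union_chains, hA, hB, restrict_restrict', restrict_restrict']
    have h1 : Set.Icc 1 (s₁ - 1) ∩ T = Set.Icc 1 r := by
      ext t; simp only [Set.mem_inter_iff, Set.mem_Icc, hT, Set.mem_union]; omega
    have h2 : Set.Icc s₁ (n - 1) ∩ T = Set.Icc s₁ (n - 1) := by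
      ext t; simp only [Set.mem_inter_iff, Set.mem_Icc, hT, Set.mem_union]; omega
    rw [h1, h2, heq r le_rfl, hτ, hT, restrict_union_sets]
  refine ⟨ci, hciMax, hlex', τ, properChain_subset hck.1 (restrict_subset _ _ _), ?_, ?_,
    hrsτ, ?_⟩
  · unfold IsFaceOf
    rw [hrsτ, hrestτ]
    exact orbEq_refl _
  · unfold IsFaceOf
    rw [hrsτ]
    exact orbEq_refl _
  · rw [hτ, restrict_of_subset rank ck hSsubT]
    exact ⟨h, hh⟩

end Stmt1
end

section
/- Let n ≥ 1 and let G be the subgroup of the symmetric group on {1,…,2n} consisting of all permutations g such that for every i with 1 ≤ i ≤ n there is some j with g({2i−1,2i}) = {2j−1,2j} (so G is isomorphic to the wreath product S_2 ≀ S_n). Then for every permutation τ of {1,…,2n}, the set {g∘τ : g ∈ G} contains exactly one permutation σ satisfying: σ⁻¹(2i−1) < σ⁻¹(2i) for all 1 ≤ i ≤ n, and σ⁻¹(2i−1) < σ⁻¹(2i+1) for all 1 ≤ i ≤ n−1. Moreover, this σ is the lexicographically smallest element of {g∘τ : g ∈ G}, where permutations are compared lexicographically via their one-line words (σ(1), σ(2),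 …, σ(2n)). -/
/-
The pair-preserving permutations are exactly those commuting with the involution that swaps the
two elements of every pair, so they form a group. Let `σ` be canonical and `h` pair-preserving
with `h σ ≠ σ`, and let `k` be the first position where they differ. The value `σ k` is the
first element `2i-1` of its pair, since otherwise its partner would sit earlier, be fixed by `h`,
and force `h` to fix `σ k` too. Every smaller value lies in a pair whose first element occurs
before position `k`, so `h` fixes it; hence `h` must raise `σ k`, and `σ` is lexicographically
smaller than `h σ`. Conversely, a non-canonical permutation is lowered by swapping the two
elements of a pair or by exchanging two consecutive pairs, so the lexicographic minimum of an
orbit is canonical.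
-/

namespace Stmt2

/-- The element of `Fin (2*n)` corresponding to `2*i-1` in 1-based notation
(the first element of the `i`-th pair). -/
def pA {n : ℕ} (i : Fin n) : Fin (2 * n) :=
  ⟨2 * i.val, by have := i.isLt; omega⟩

/-- The element of `Fin (2*n)` corresponding to `2*i` in 1-based notation
(the second element of the `i`-th pair). -/
def pB {n : ℕ} (i : Fin n) : Fin (2 * n) :=
  ⟨2 * i.val + 1, by have := i.isLt; omega⟩

/-- The predicate defining the wreath product subgroup `S_2 ≀ S_n` inside
`Sym({1,…,2n})`: every pair `{2i-1, 2i}` is carried to some pair `{2j-1, 2j}`. -/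
def IsPairPerm {n : ℕ} (g : Equiv.Perm (Fin (2 * n))) : Prop :=
  ∀ i : Fin n, ∃ j : Fin n, ⇑g '' {pA i, pB i} = ({pA j, pB j} : Set (Fin (2 * n)))

/-- Lexicographic comparison of one-line words of permutations. -/
def PermLexLt {n : ℕ} (σ τ : Equiv.Perm (Fin (2 * n))) : Prop :=
  ∃ k : Fin (2 * n), (∀ j : Fin (2 * n), j < k → σ j = τ j) ∧ σ k < τ k

/-- The canonical-representative condition: `σ⁻¹(2i-1) < σ⁻¹(2i)` for all
`1 ≤ i ≤ n`, and `σ⁻¹(2i-1) < σ⁻¹(2i+1)` for all `1 ≤ i ≤ n-1`. -/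
def IsCanonical {n : ℕ} (σ : Equiv.Perm (Fin (2 * n))) : Prop :=
  (∀ i : Fin n, σ.symm (pA i) < σ.symm (pB i)) ∧
  (∀ i j : Fin n, (j : ℕ) = (i : ℕ) + 1 → σ.symm (pA i) < σ.symm (pA j))

variable {n : ℕ}

lemma pA_injective : Function.Injective (pA (n := n)) := fun i j h => by
  simpa [pA, Fin.ext_iff] using h

lemma pB_injective : Function.Injective (pB (n := n)) := fun i j h => by
  simpa [pB, Fin.ext_iff] using h

@[simp]
lemma pA_inj {i j : Fin n} : pA i = pA j ↔ i = j := pA_injective.eq_iff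

@[simp]
lemma pB_inj {i j : Fin n} : pB i = pB j ↔ i = j := pB_injective.eq_iff

@[simp]
lemma pA_ne_pB (i j : Fin n) : pA i ≠ pB j := by
  simp only [pA, pB, ne_eq, Fin.ext_iff]; omega

@[simp]
lemma pB_ne_pA (i j : Fin n) : pB i ≠ pA j := (pA_ne_pB j i).symm

lemma pA_strictMono : StrictMono (pA (n := n)) := fun i j h => by
  simp only [pA, Fin.mk_lt_mk]; omega

lemma pA_lt_pB (i : Fin n) : pA i < pB i := by
  simp only [pA, pB, Fin.mk_lt_mk]; omega

lemma exists_eq_pA_or_eq_pB (x : Fin (2 * n)) : ∃ i, x = pA i ∨ x = pB i := by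
  refine ⟨⟨x / 2, by omega⟩, ?_⟩
  simp only [pA, pB, Fin.ext_iff]; omega

lemma exists_lt_of_lt_pA {x : Fin (2 * n)} {i : Fin n} (hx : x < pA i) :
    ∃ j < i, x = pA j ∨ x = pB j := by
  refine ⟨⟨x / 2, by omega⟩, ?_, ?_⟩
  · simp only [pA, Fin.lt_def] at hx ⊢; omega
  · simp only [pA, pB, Fin.ext_iff]; omega

def pairPartner : Equiv.Perm (Fin (2 * n)) :=
  Function.Involutive.toPerm
    (fun x => ⟨if x.val % 2 = 0 then x + 1 else x - 1, by split <;> omega⟩)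
    (fun x => by ext; simp only; split <;> split <;> omega)

@[simp]
lemma pairPartner_pA (i : Fin n) : pairPartner (pA i) = pB i := by
  ext; simp [pairPartner, Function.Involutive.toPerm, pA, pB]

@[simp]
lemma pairPartner_pB (i : Fin n) : pairPartner (pB i) = pA i := by
  ext; simp [pairPartner, Function.Involutive.toPerm, pA, pB]

@[simp]
lemma pairPartner_pairPartner (x : Fin (2 * n)) : pairPartner (pairPartner x) = x := by
  obtain ⟨i, rfl | rfl⟩ := exists_eq_pA_or_eq_pB x <;> simp

lemma commute_pairPartner_iff {g : Equiv.Perm (Fin (2 * n))} :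
    Commute g pairPartner ↔ ∀ i, g (pB i) = pairPartner (g (pA i)) := by
  refine ⟨fun hg i => ?_, fun hg => ?_⟩
  · rw [← pairPartner_pA, ← Equiv.Perm.mul_apply, hg.eq, Equiv.Perm.mul_apply]
  · ext1 x
    obtain ⟨i, rfl | rfl⟩ := exists_eq_pA_or_eq_pB x <;> simp [hg]

lemma isPairPerm_iff_commute {g : Equiv.Perm (Fin (2 * n))} :
    IsPairPerm g ↔ Commute g pairPartner := by
  refine ⟨fun hg => commute_pairPartner_iff.2 fun i => ?_, fun hg i => ?_⟩
  · obtain ⟨j, hj⟩ := hg i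
    rw [Set.image_pair, Set.pair_eq_pair_iff] at hj
    rcases hj with ⟨hA, hB⟩ | ⟨hA, hB⟩ <;> simp [hA, hB]
  · obtain ⟨j, hj | hj⟩ := exists_eq_pA_or_eq_pB (g (pA i)) <;>
      refine ⟨j, ?_⟩ <;> simp [Set.image_pair, commute_pairPartner_iff.1 hg, hj, Set.pair_comm]

lemma apply_pB_eq_of_apply_pA_eq {h : Equiv.Perm (Fin (2 * n))} (hh : Commute h pairPartner)
    {i : Fin n} (hi : h (pA i) = pA i) : h (pB i) = pB i := by
  rw [commute_pairPartner_iff.1 hh, hi, pairPartner_pA]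

lemma commute_swap_pA_pB (i : Fin n) : Commute (Equiv.swap (pA i) (pB i)) pairPartner := by
  refine commute_pairPartner_iff.2 fun l => ?_
  by_cases hl : l = i <;> simp [Equiv.swap_apply_def, hl]

lemma commute_swap_pairs (i j : Fin n) :
    Commute (Equiv.swap (pA i) (pA j) * Equiv.swap (pB i) (pB j)) pairPartner := by
  refine commute_pairPartner_iff.2 fun l => ?_
  by_cases hi : l = i <;> by_cases hj : l = j <;> simp [Equiv.swap_apply_def, hi, hj]

lemma lt_apply_of_forall_lt_apply_eq {α : Type*} [LinearOrder α] {h : Equiv.Perm α} {x : α}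
    (hfix : ∀ y < x, h y = y) (hx : h x ≠ x) : x < h x :=
  lt_of_le_of_ne (not_lt.1 fun hlt => hx (h.injective (hfix _ hlt))) hx.symm

lemma permLexLt_iff_toLex_lt {σ τ : Equiv.Perm (Fin (2 * n))} :
    PermLexLt σ τ ↔ toLex ⇑σ < toLex ⇑τ := Iff.rfl

lemma permLexLt_mul_of_forall_apply_eq {σ h : Equiv.Perm (Fin (2 * n))} {x : Fin (2 * n)}
    (hfix : ∀ y, σ.symm y < σ.symm x → h y = y) (hx : h x < x) : PermLexLt (h * σ) σ :=
  ⟨σ.symm x, fun k hk => by simpa using hfix (σ k) (by simpa using hk), by simpa using hx⟩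

lemma IsCanonical.symm_pA_strictMono {σ : Equiv.Perm (Fin (2 * n))} (hσ : IsCanonical σ) :
    StrictMono fun i => σ.symm (pA i) := by
  cases n with
  | zero => exact fun i => i.elim0
  | succ m => exact Fin.strictMono_iff_lt_succ.2 fun i => hσ.2 _ _ (by simp)

lemma IsCanonical.lt_apply {σ h : Equiv.Perm (Fin (2 * n))} (hσ : IsCanonical σ)
    (hh : Commute h pairPartner) {k : Fin (2 * n)} (hfix : ∀ j < k, h (σ j) = σ j)
    (hk : h (σ k) ≠ σ k) : σ k < h (σ k) := by
  have fixed : ∀ y, σ.symm y < k → h y = y := fun y hy => by simpa using hfix _ hy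
  obtain ⟨i, hi | hi⟩ := exists_eq_pA_or_eq_pB (σ k)
  · have hki : σ.symm (pA i) = k := by rw [← hi, Equiv.symm_apply_apply]
    refine lt_apply_of_forall_lt_apply_eq (fun y hy => ?_) hk
    obtain ⟨j, hji, hy⟩ := exists_lt_of_lt_pA (hi ▸ hy)
    have hj : h (pA j) = pA j := fixed _ (hki ▸ hσ.symm_pA_strictMono hji)
    rcases hy with rfl | rfl
    exacts [hj, apply_pB_eq_of_apply_pA_eq hh hj]
  · have hki : σ.symm (pA i) < k := by simpa [← hi] using hσ.1 i
    exact absurd (hi ▸ apply_pB_eq_of_apply_pA_eq hh (fixed _ hki)) hk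

lemma IsCanonical.permLexLt_mul {σ h : Equiv.Perm (Fin (2 * n))} (hσ : IsCanonical σ)
    (hh : Commute h pairPartner) (hne : h * σ ≠ σ) : PermLexLt σ (h * σ) := by
  rcases lt_or_gt_of_ne (fun e => hne (DFunLike.coe_injective e) : toLex ⇑(h * σ) ≠ toLex ⇑σ)
    with ⟨k, hagree, hlt⟩ | hgt
  · exact absurd hlt (hσ.lt_apply hh hagree hlt.ne).not_gt
  · exact hgt

lemma exists_permLexLt_of_not_isCanonical {σ : Equiv.Perm (Fin (2 * n))}
    (hσ : ¬ IsCanonical σ) : ∃ h, Commute h pairPartner ∧ PermLexLt (h * σ) σ := by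
  have earlier_ne {x y z : Fin (2 * n)} (hy : σ.symm y < σ.symm x) (hz : σ.symm x ≤ σ.symm z) :
      y ≠ z := ne_of_apply_ne σ.symm (hy.trans_le hz).ne
  by_cases hpair : ∃ i, σ.symm (pB i) < σ.symm (pA i)
  · obtain ⟨i, hi⟩ := hpair
    refine ⟨_, commute_swap_pA_pB i, permLexLt_mul_of_forall_apply_eq (x := pB i)
      (fun y hy => Equiv.swap_apply_of_ne_of_ne (earlier_ne hy hi.le) (earlier_ne hy le_rfl))
      ?_⟩
    simpa using pA_lt_pB i
  · simp only [not_exists, not_lt] at hpair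
    have hAB (i : Fin n) : σ.symm (pA i) < σ.symm (pB i) := (hpair i).lt_of_ne (by simp)
    obtain ⟨i, j, hij, hji⟩ : ∃ i j : Fin n, (j : ℕ) = i + 1 ∧ σ.symm (pA j) ≤ σ.symm (pA i) := by
      simpa [IsCanonical, hAB] using hσ
    replace hji : σ.symm (pA j) < σ.symm (pA i) := hji.lt_of_ne (by simp [← Fin.val_ne_iff, hij])
    refine ⟨_, commute_swap_pairs i j, permLexLt_mul_of_forall_apply_eq (x := pA j)
      (fun y hy => ?_) ?_⟩
    · rw [Equiv.Perm.mul_apply,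
        Equiv.swap_apply_of_ne_of_ne (earlier_ne hy (hji.trans (hAB i)).le)
          (earlier_ne hy (hAB j).le),
        Equiv.swap_apply_of_ne_of_ne (earlier_ne hy hji.le) (earlier_ne hy le_rfl)]
    · rw [Equiv.Perm.mul_apply, Equiv.swap_apply_of_ne_of_ne (pA_ne_pB j i) (pA_ne_pB j j),
        Equiv.swap_apply_right]
      exact pA_strictMono (show i < j by simp [Fin.lt_def, hij])

theorem unique_canonical_orbit_representative_general {n : ℕ}
    (τ : Equiv.Perm (Fin (2 * n))) :
    (∃! σ : Equiv.Perm (Fin (2 * n)),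
        (∃ g : Equiv.Perm (Fin (2 * n)), IsPairPerm g ∧ g * τ = σ) ∧ IsCanonical σ) ∧
    (∀ σ : Equiv.Perm (Fin (2 * n)),
        (∃ g : Equiv.Perm (Fin (2 * n)), IsPairPerm g ∧ g * τ = σ) → IsCanonical σ →
        ∀ σ' : Equiv.Perm (Fin (2 * n)),
          (∃ g : Equiv.Perm (Fin (2 * n)), IsPairPerm g ∧ g * τ = σ') → σ' ≠ σ →
          PermLexLt σ σ') := by
  set orbit := {σ | ∃ g, IsPairPerm g ∧ g * τ = σ}
  have lexLt : ∀ σ ∈ orbit, IsCanonical σ → ∀ σ' ∈ orbit, σ' ≠ σ → PermLexLt σ σ' := by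
    rintro _ ⟨g, hg, rfl⟩ hσ _ ⟨g', hg', rfl⟩ hne
    have hmul : g' * τ = (g' * g⁻¹) * (g * τ) := by group
    rw [hmul] at hne ⊢
    exact hσ.permLexLt_mul
      ((isPairPerm_iff_commute.1 hg').mul_left (isPairPerm_iff_commute.1 hg).inv_left) hne
  obtain ⟨σ, hσ, hmin⟩ := Set.exists_min_image orbit (fun σ => toLex ⇑σ) (Set.toFinite _)
    ⟨τ, 1, isPairPerm_iff_commute.2 (Commute.one_left _), one_mul τ⟩
  have hcan : IsCanonical σ := by
    by_contra hnc
    obtain ⟨h, hh, hlt⟩ := exists_permLexLt_of_not_isCanonical hnc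
    obtain ⟨g, hg, rfl⟩ := hσ
    exact (hmin _ ⟨h * g, isPairPerm_iff_commute.2 (hh.mul_left (isPairPerm_iff_commute.1 hg)),
      mul_assoc h g τ⟩).not_gt hlt
  refine ⟨⟨σ, ⟨hσ, hcan⟩, fun σ' ⟨hσ', hcan'⟩ => ?_⟩, lexLt⟩
  by_contra hne
  exact (permLexLt_iff_toLex_lt.1 (lexLt σ hσ hcan σ' hσ' hne)).asymm
    (lexLt σ' hσ' hcan' σ hσ (Ne.symm hne))

theorem unique_canonical_orbit_representative {n : ℕ} (hn : 1 ≤ n)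
    (τ : Equiv.Perm (Fin (2 * n))) :
    (∃! σ : Equiv.Perm (Fin (2 * n)),
        (∃ g : Equiv.Perm (Fin (2 * n)), IsPairPerm g ∧ g * τ = σ) ∧ IsCanonical σ) ∧
    (∀ σ : Equiv.Perm (Fin (2 * n)),
        (∃ g : Equiv.Perm (Fin (2 * n)), IsPairPerm g ∧ g * τ = σ) → IsCanonical σ →
        ∀ σ' : Equiv.Perm (Fin (2 * n)),
          (∃ g : Equiv.Perm (Fin (2 * n)), IsPairPerm g ∧ g * τ = σ') → σ' ≠ σ →
          PermLexLt σ σ') :=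
  unique_canonical_orbit_representative_general τ

end Stmt2
end

section
/- Let B_6 be the Boolean lattice of subsets of {1,…,6} and let G ≤ Sym({1,…,6}) be the subgroup of permutations preserving the partition of {1,…,6} into the triples {1,2,3} and {4,5,6} (so G ≅ S_3 ≀ S_2). Then the quotient complex Δ(B_6)/(S_3 ≀ S_2) is not shellable: there is no linear order F_1,…,F_r of its facets such that for every l with 1 < l ≤ r and every common face of F_l and some earlier facet F_k (k < l), there exists T' ⊆ {1,2,3,4,5} with |T'| = 4 containing the rank set of that common face such that the face of F_l with rank set T' is also a face of some F_{k'} with k' < l. -/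
namespace Stmt4

/-- The triple `{3i+1, 3i+2, 3i+3}` (1-based), i.e. `{3i, 3i+1, 3i+2}` in
`Fin 6`, for `i : Fin 2`. -/
def triple (i : Fin 2) : Set (Fin 6) :=
  {⟨3 * i.val, by have := i.isLt; omega⟩,
   ⟨3 * i.val + 1, by have := i.isLt; omega⟩,
   ⟨3 * i.val + 2, by have := i.isLt; omega⟩}

/-- Membership in the wreath product subgroup `S_3 ≀ S_2 ≤ Sym({1,…,6})`:
each of the triples `{1,2,3}`, `{4,5,6}` is carried to one of these triples. -/
def IsTriplePerm (g : Equiv.Perm (Fin 6)) : Prop :=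
  ∀ i : Fin 2, ∃ j : Fin 2, ⇑g '' triple i = triple j

/-- A chain in the proper part of the Boolean lattice `B_6`. -/
def ProperChain (c : Set (Set (Fin 6))) : Prop :=
  IsChain (· ⊆ ·) c ∧ ∀ A ∈ c, A.Nonempty ∧ A ≠ Set.univ

/-- The rank set of a chain of subsets: the set of cardinalities of its members. -/
noncomputable def rankSet (c : Set (Set (Fin 6))) : Set ℕ :=
  Set.ncard '' c

/-- Two chains lie in the same `S_3 ≀ S_2`-orbit. -/
def OrbEq (c c' : Set (Set (Fin 6))) : Prop :=
  ∃ g : Equiv.Perm (Fin 6), IsTriplePerm g ∧ (fun A => ⇑g '' A) '' c = c'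

/-- A maximal chain of the proper part of `B_6`: one member of each
cardinality `1,…,5`. -/
noncomputable def MaxChain (c : Set (Set (Fin 6))) : Prop :=
  ProperChain c ∧ rankSet c = Set.Icc 1 5

/-- The subchain of `c` consisting of its members whose cardinality lies in `T`. -/
noncomputable def restrict (c : Set (Set (Fin 6))) (T : Set ℕ) : Set (Set (Fin 6)) :=
  {A ∈ c | A.ncard ∈ T}

/-- The chain (orbit) `σ` is a face of the facet represented by the chain `c`. -/
noncomputable def IsFaceOf (σ c : Set (Set (Fin 6))) : Prop :=
  OrbEq (restrict c (rankSet σ)) σ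

/-!
Every maximal chain is the flag of initial segments of an enumeration of `Fin 6`, and its orbit
is determined by the positions at which the enumeration visits the first triple, up to exchanging
the triples; so there are ten facets, represented by canonical enumerations. Likewise the orbit of
a chain `(A_t)_{t ∈ T}` is determined by its profile `t ↦ |A_t ∩ {0,1,2}|`, up to replacing it by
`t ↦ t - |A_t ∩ {0,1,2}|`. Hence whether a facet satisfies the shelling condition depends only on
the set of facets preceding it, and a breadth-first search through the sets of facets that can
begin a shelling shows that none of them has six elements.
-/

lemma mem_triple_zero {x : Fin 6} : x ∈ triple 0 ↔ x.1 < 3 := by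
  fin_cases x <;> simp [triple]

lemma triple_one_eq_compl : triple 1 = (triple 0)ᶜ := by
  ext x; fin_cases x <;> simp [triple]

lemma perm_image_eq_iff {α : Type*} (g : Equiv.Perm α) (s t : Set α) :
    ⇑g '' s = t ↔ ∀ x, g x ∈ t ↔ x ∈ s := by
  refine ⟨?_, fun h => Set.ext fun y => ?_⟩
  · rintro rfl x
    exact g.injective.mem_set_image
  · simpa using (h (g.symm y)).symm

lemma isTriplePerm_iff {g : Equiv.Perm (Fin 6)} :
    IsTriplePerm g ↔ (∀ x, g x ∈ triple 0 ↔ x ∈ triple 0) ∨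
      (∀ x, g x ∈ triple 0 ↔ x ∉ triple 0) := by
  simp only [IsTriplePerm, Fin.forall_fin_two, Fin.exists_fin_two, perm_image_eq_iff,
    triple_one_eq_compl, Set.mem_compl_iff, not_iff_not]
  constructor
  · rintro ⟨h | h, -⟩
    · exact Or.inl h
    · exact Or.inr fun x => by rw [← h x, not_not]
  · rintro (h | h)
    · exact ⟨Or.inl h, Or.inr h⟩
    · exact ⟨Or.inr fun x => by simp [h], Or.inl h⟩

lemma IsTriplePerm.one : IsTriplePerm 1 :=
  isTriplePerm_iff.2 <| Or.inl fun _ => Iff.rfl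

lemma IsTriplePerm.mul {g h : Equiv.Perm (Fin 6)} (hg : IsTriplePerm g) (hh : IsTriplePerm h) :
    IsTriplePerm (g * h) := by
  rw [isTriplePerm_iff] at *
  simp only [Equiv.Perm.coe_mul, Function.comp_apply]
  rcases hg with hg | hg <;> rcases hh with hh | hh
  · exact Or.inl fun x => (hg _).trans (hh x)
  · exact Or.inr fun x => (hg _).trans (hh x)
  · exact Or.inr fun x => (hg _).trans (not_congr (hh x))
  · exact Or.inl fun x => (hg _).trans ((not_congr (hh x)).trans not_not)

lemma IsTriplePerm.inv {g : Equiv.Perm (Fin 6)} (hg : IsTriplePerm g) : IsTriplePerm g⁻¹ := by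
  rw [isTriplePerm_iff] at *
  rcases hg with hg | hg
  · exact Or.inl fun x => by simpa using (hg (g⁻¹ x)).symm
  · exact Or.inr fun x => by simpa using (not_congr (hg (g⁻¹ x))).symm

lemma OrbEq.refl (c : Set (Set (Fin 6))) : OrbEq c c :=
  ⟨1, .one, by simp⟩

lemma OrbEq.symm {c c' : Set (Set (Fin 6))} : OrbEq c c' → OrbEq c' c := by
  rintro ⟨g, hg, rfl⟩
  refine ⟨g⁻¹, hg.inv, ?_⟩
  simp [Set.image_image]

lemma OrbEq.trans {c c' c'' : Set (Set (Fin 6))} : OrbEq c c' → OrbEq c' c'' → OrbEq c c'' := by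
  rintro ⟨g, hg, rfl⟩ ⟨h, hh, rfl⟩
  refine ⟨h * g, hh.mul hg, ?_⟩
  simp [Set.image_image, Set.image_comp]

lemma ProperChain.mono {c c' : Set (Set (Fin 6))} (h : ProperChain c) (hsub : c' ⊆ c) :
    ProperChain c' :=
  ⟨h.1.mono hsub, fun A hA => h.2 A (hsub hA)⟩

lemma _root_.IsChain.eq_of_ncard_eq {α : Type*} [Finite α] {c : Set (Set α)}
    (hc : IsChain (· ⊆ ·) c) {A B : Set α} (hA : A ∈ c) (hB : B ∈ c)
    (h : A.ncard = B.ncard) : A = B := by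
  rcases hc.total hA hB with hAB | hBA
  · exact Set.eq_of_subset_of_ncard_le hAB h.ge
  · exact (Set.eq_of_subset_of_ncard_le hBA h.le).symm

lemma restrict_image (g : Equiv.Perm (Fin 6)) (c : Set (Set (Fin 6))) (T : Set ℕ) :
    restrict ((fun A => ⇑g '' A) '' c) T = (fun A => ⇑g '' A) '' restrict c T := by
  ext B
  simp only [restrict, Set.mem_image, Set.mem_ofPred_eq]
  constructor
  · rintro ⟨⟨A, hA, rfl⟩, hT⟩
    exact ⟨A, ⟨hA, by rwa [Set.ncard_image_of_injective _ g.injective] at hT⟩, rfl⟩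
  · rintro ⟨A, ⟨hA, hT⟩, rfl⟩
    exact ⟨⟨A, hA, rfl⟩, by rwa [Set.ncard_image_of_injective _ g.injective]⟩

lemma OrbEq.restrict {c c' : Set (Set (Fin 6))} (h : OrbEq c c') (T : Set ℕ) :
    OrbEq (restrict c T) (restrict c' T) := by
  obtain ⟨g, hg, rfl⟩ := h
  exact ⟨g, hg, (restrict_image g c T).symm⟩

lemma OrbEq.rankSet_eq {c c' : Set (Set (Fin 6))} (h : OrbEq c c') : rankSet c = rankSet c' := by
  obtain ⟨g, -, rfl⟩ := h
  simp only [rankSet, Set.image_image, Set.ncard_image_of_injective _ g.injective]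

lemma isFaceOf_congr {σ σ' c c' : Set (Set (Fin 6))} (hσ : OrbEq σ σ') (hc : OrbEq c c') :
    IsFaceOf σ c ↔ IsFaceOf σ' c' := by
  unfold IsFaceOf
  rw [← hσ.rankSet_eq]
  have hr := hc.restrict (rankSet σ)
  exact ⟨fun h => hr.symm.trans (h.trans hσ), fun h => hr.trans (h.trans hσ.symm)⟩

/-! ### Maximal chains as flags of initial segments of an enumeration -/

def initSeg (e : Equiv.Perm (Fin 6)) (t : ℕ) : Set (Fin 6) :=
  ↑((Finset.univ.filter fun k : Fin 6 => k.1 < t).image e)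

def flag (e : Equiv.Perm (Fin 6)) : Set (Set (Fin 6)) :=
  initSeg e '' Set.Icc 1 5

lemma ncard_initSeg (e : Equiv.Perm (Fin 6)) {t : ℕ} (ht : t ≤ 6) :
    (initSeg e t).ncard = t := by
  rw [initSeg, Set.ncard_coe_finset, Finset.card_image_of_injective _ e.injective]
  interval_cases t <;> rfl

lemma ncard_initSeg_of_mem_Icc (e : Equiv.Perm (Fin 6)) {t : ℕ} (ht : t ∈ Set.Icc 1 5) :
    (initSeg e t).ncard = t :=
  ncard_initSeg e (ht.2.trans (by norm_num))

lemma initSeg_mono (e : Equiv.Perm (Fin 6)) {s t : ℕ} (hst : s ≤ t) :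
    initSeg e s ⊆ initSeg e t := by
  unfold initSeg
  gcongr

lemma image_initSeg (g e : Equiv.Perm (Fin 6)) (t : ℕ) :
    ⇑g '' initSeg e t = initSeg (g * e) t := by
  simp [initSeg, Set.image_image]

lemma image_flag (g e : Equiv.Perm (Fin 6)) : (fun A => ⇑g '' A) '' flag e = flag (g * e) := by
  simp only [flag, Set.image_image, image_initSeg]

lemma rankSet_image_initSeg (e : Equiv.Perm (Fin 6)) {T : Set ℕ} (hT : T ⊆ Set.Icc 1 5) :
    rankSet (initSeg e '' T) = T := by
  rw [rankSet, Set.image_image]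
  exact (Set.image_congr fun t ht => ncard_initSeg_of_mem_Icc e (hT ht)).trans (Set.image_id' _)

lemma maxChain_flag (e : Equiv.Perm (Fin 6)) : MaxChain (flag e) := by
  refine ⟨⟨?_, ?_⟩, ?_⟩
  · rintro _ ⟨s, -, rfl⟩ _ ⟨t, -, rfl⟩ -
    exact (le_total s t).imp (initSeg_mono e) (initSeg_mono e)
  · rintro _ ⟨t, ht, rfl⟩
    refine ⟨Set.nonempty_of_ncard_ne_zero ?_, fun h => ?_⟩
    · rw [ncard_initSeg_of_mem_Icc e ht]; exact Nat.one_le_iff_ne_zero.1 ht.1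
    · have := congrArg Set.ncard h
      rw [ncard_initSeg_of_mem_Icc e ht, Set.ncard_univ, Nat.card_eq_fintype_card,
        Fintype.card_fin] at this
      exact absurd ht.2 (by omega)
  · exact rankSet_image_initSeg e subset_rfl

lemma restrict_flag (e : Equiv.Perm (Fin 6)) {T : Set ℕ} (hT : T ⊆ Set.Icc 1 5) :
    restrict (flag e) T = initSeg e '' T := by
  ext A
  simp only [restrict, flag, Set.mem_image, Set.mem_ofPred_eq]
  constructor
  · rintro ⟨⟨t, ht, rfl⟩, hA⟩
    rw [ncard_initSeg_of_mem_Icc e ht] at hA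
    exact ⟨t, hA, rfl⟩
  · rintro ⟨t, ht, rfl⟩
    exact ⟨⟨t, hT ht, rfl⟩, by rwa [ncard_initSeg_of_mem_Icc e (hT ht)]⟩

lemma exists_eq_initSeg (A : Fin 7 → Set (Fin 6)) (hA : Monotone A)
    (hcard : ∀ t, (A t).ncard = t) :
    ∃ e : Equiv.Perm (Fin 6), ∀ t : Fin 7, A t = initSeg e t := by
  have hnew : ∀ k : Fin 6, (A k.succ \ A k.castSucc).Nonempty := fun k => by
    apply Set.nonempty_of_ncard_ne_zero
    rw [Set.ncard_sdiff (hA (Fin.castSucc_le_succ k)), hcard, hcard]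
    simp
  choose x hx using hnew
  have hlt : ∀ k k' : Fin 6, k < k' → x k ≠ x k' := fun k k' hkk' heq =>
    (hx k').2 (hA (Fin.succ_le_castSucc_iff.2 hkk') (heq ▸ (hx k).1))
  have hinj : Function.Injective x := fun k k' heq => by
    by_contra hne
    rcases lt_or_gt_of_ne hne with h | h
    exacts [hlt k k' h heq, hlt k' k h heq.symm]
  refine ⟨Equiv.ofBijective x (Finite.injective_iff_bijective.1 hinj), fun t => ?_⟩
  refine (Set.eq_of_subset_of_ncard_le ?_ ?_).symm
  · intro y hy
    simp only [initSeg, Finset.coe_image, Finset.coe_filter, Set.mem_image,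
      Set.mem_ofPred_eq, Finset.mem_univ, true_and] at hy
    obtain ⟨k, hk, rfl⟩ := hy
    exact hA (Fin.le_iff_val_le_val.2 (by simp; omega)) (hx k).1
  · rw [hcard, ncard_initSeg _ (by omega)]

lemma MaxChain.exists_monotone {c : Set (Set (Fin 6))} (hc : MaxChain c) :
    ∃ A : Fin 7 → Set (Fin 6), Monotone A ∧ (∀ t, (A t).ncard = t) ∧
      ∀ B, B ∈ c ↔ ∃ t : Fin 7, (t : ℕ) ∈ Set.Icc 1 5 ∧ A t = B := by
  set c' := insert ∅ (insert Set.univ c)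
  have hc' : IsChain (· ⊆ ·) c' :=
    (hc.1.1.insert fun _ _ _ => Or.inr (Set.subset_univ _)).insert
      fun _ _ _ => Or.inl (Set.empty_subset _)
  have hrank : ∀ t : Fin 7, ∃ A ∈ c', A.ncard = t := fun t => by
    by_cases ht : (t : ℕ) ∈ Set.Icc 1 5
    · obtain ⟨A, hA, hAt⟩ := hc.2.symm ▸ ht
      exact ⟨A, by simp [c', hA], hAt⟩
    · rcases Nat.lt_or_ge t 1 with h | h
      · exact ⟨∅, by simp [c'], by simp; omega⟩
      · refine ⟨Set.univ, by simp [c'], ?_⟩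
        simp only [Set.mem_Icc, not_and, not_le] at ht
        simp; omega
  choose A hAc hAcard using hrank
  refine ⟨A, fun s t hst => ?_, hAcard, fun B => ⟨fun hB => ?_, ?_⟩⟩
  · rcases hc'.total (hAc s) (hAc t) with h | h
    · exact h
    · rw [Set.eq_of_subset_of_ncard_le h (by rw [hAcard, hAcard]; exact_mod_cast hst)]
  · have hn : B.ncard ∈ Set.Icc 1 5 := hc.2 ▸ ⟨B, hB, rfl⟩
    exact ⟨⟨B.ncard, by have := hn.2; omega⟩, hn,
      hc'.eq_of_ncard_eq (hAc _) (by simp [c', hB]) (hAcard _)⟩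
  · rintro ⟨t, ⟨ht1, ht5⟩, rfl⟩
    rcases hAc t with h | h | h
    · have := hAcard t; simp [h] at this; omega
    · have := hAcard t; simp [h] at this; omega
    · exact h

lemma MaxChain.exists_eq_flag {c : Set (Set (Fin 6))} (hc : MaxChain c) :
    ∃ e : Equiv.Perm (Fin 6), c = flag e := by
  obtain ⟨A, hA, hcard, hc⟩ := hc.exists_monotone
  obtain ⟨e, he⟩ := exists_eq_initSeg A hA hcard
  refine ⟨e, Set.ext fun B => (hc B).trans ⟨?_, ?_⟩⟩
  · rintro ⟨t, ht, rfl⟩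
    exact ⟨t, ht, (he t).symm⟩
  · rintro ⟨t, ht, rfl⟩
    exact ⟨⟨t, by have := ht.2; omega⟩, ht, he _⟩

/-! ### Profiles -/

def profile (e : Equiv.Perm (Fin 6)) (t : ℕ) : ℕ :=
  (Finset.univ.filter fun k : Fin 6 => k.1 < t ∧ (e k).1 < 3).card

lemma ncard_initSeg_inter_triple_zero (e : Equiv.Perm (Fin 6)) (t : ℕ) :
    (initSeg e t ∩ triple 0).ncard = profile e t := by
  have : initSeg e t ∩ triple 0 =
      ↑((Finset.univ.filter fun k : Fin 6 => k.1 < t ∧ (e k).1 < 3).image e) := by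
    ext x
    simp only [initSeg, mem_triple_zero, Finset.coe_image, Finset.coe_filter, Set.mem_inter_iff,
      Set.mem_image, Set.mem_ofPred_eq, Finset.mem_univ, true_and]
    constructor
    · rintro ⟨⟨k, hk, rfl⟩, hx⟩
      exact ⟨k, ⟨hk, hx⟩, rfl⟩
    · rintro ⟨k, ⟨hk, hx⟩, rfl⟩
      exact ⟨⟨k, hk, rfl⟩, hx⟩
  rw [this, Set.ncard_coe_finset, Finset.card_image_of_injective _ e.injective, profile]

/-- The profiles of `e` and `e'` agree on `T`, possibly after exchanging the two triples. -/
def ProfilesAgreeOn (e e' : Equiv.Perm (Fin 6)) (T : Finset ℕ) : Prop :=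
  (∀ t ∈ T, profile e t = profile e' t) ∨ (∀ t ∈ T, profile e t + profile e' t = t)

instance (e e' : Equiv.Perm (Fin 6)) (T : Finset ℕ) : Decidable (ProfilesAgreeOn e e' T) := by
  unfold ProfilesAgreeOn; infer_instance

lemma IsTriplePerm.ncard_image_inter_triple_zero {g : Equiv.Perm (Fin 6)} (hg : IsTriplePerm g) :
    (∀ A, (⇑g '' A ∩ triple 0).ncard = (A ∩ triple 0).ncard) ∨
      (∀ A, (⇑g '' A ∩ triple 0).ncard + (A ∩ triple 0).ncard = A.ncard) := by
  rcases isTriplePerm_iff.1 hg with h | h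
  · have h0 : ⇑g '' triple 0 = triple 0 := (perm_image_eq_iff g _ _).2 h
    refine Or.inl fun A => ?_
    rw [← Set.ncard_image_of_injective (A ∩ triple 0) g.injective, Set.image_inter g.injective,
      h0]
  · have h0 : ⇑g '' (triple 0)ᶜ = triple 0 := (perm_image_eq_iff g _ _).2 h
    refine Or.inr fun A => ?_
    rw [← Set.ncard_inter_add_ncard_sdiff_eq_ncard A (triple 0), add_comm, Set.sdiff_eq,
      ← Set.ncard_image_of_injective (A ∩ (triple 0)ᶜ) g.injective,
      Set.image_inter g.injective, h0]

lemma ProfilesAgreeOn.of_orbEq {e e' : Equiv.Perm (Fin 6)} {T : Finset ℕ}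
    (hT : ↑T ⊆ Set.Icc 1 5) (h : OrbEq (initSeg e '' ↑T) (initSeg e' '' ↑T)) :
    ProfilesAgreeOn e e' T := by
  obtain ⟨g, hg, hgT⟩ := h
  have hmap : ∀ t ∈ T, ⇑g '' initSeg e t = initSeg e' t := fun t ht => by
    have hmem : ⇑g '' initSeg e t ∈ initSeg e' '' ↑T := hgT ▸ ⟨_, ⟨t, ht, rfl⟩, rfl⟩
    obtain ⟨s, hs, hst⟩ := hmem
    have := congrArg Set.ncard hst
    rw [Set.ncard_image_of_injective _ g.injective, ncard_initSeg_of_mem_Icc _ (hT hs),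
      ncard_initSeg_of_mem_Icc _ (hT ht)] at this
    rw [← hst, this]
  rcases hg.ncard_image_inter_triple_zero with hg | hg
  · refine Or.inl fun t ht => ?_
    rw [← ncard_initSeg_inter_triple_zero, ← ncard_initSeg_inter_triple_zero, ← hmap t ht, hg]
  · refine Or.inr fun t ht => ?_
    rw [← ncard_initSeg_inter_triple_zero, ← ncard_initSeg_inter_triple_zero, ← hmap t ht,
      add_comm, hg, ncard_initSeg_of_mem_Icc _ (hT ht)]

lemma orbEq_flag_of_forall_mem_iff {e e' : Equiv.Perm (Fin 6)}
    (h : (∀ k, e k ∈ triple 0 ↔ e' k ∈ triple 0) ∨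
      (∀ k, e k ∈ triple 0 ↔ e' k ∉ triple 0)) :
    OrbEq (flag e) (flag e') := by
  refine ⟨e' * e⁻¹, isTriplePerm_iff.2 ?_, by rw [image_flag, inv_mul_cancel_right]⟩
  rcases h with h | h
  · exact Or.inl fun x => by simpa using (h (e⁻¹ x)).symm
  · exact Or.inr fun x => by simpa using (not_congr (h (e⁻¹ x))).symm

/-! ### The ten canonical facets -/

/-- Each row lists `{0,…,5}` so that the first triple `{0,1,2}` and the second triple `{3,4,5}`
each appear in increasing order and `0` comes first; the rows are the ten ways to interleave the
two triples up to exchanging them. -/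
def canonEnum : Fin 10 → Fin 6 → Fin 6 :=
  ![![0, 1, 2, 3, 4, 5], ![0, 1, 3, 2, 4, 5], ![0, 1, 3, 4, 2, 5], ![0, 1, 3, 4, 5, 2],
    ![0, 3, 1, 2, 4, 5], ![0, 3, 1, 4, 2, 5], ![0, 3, 1, 4, 5, 2], ![0, 3, 4, 1, 2, 5],
    ![0, 3, 4, 1, 5, 2], ![0, 3, 4, 5, 1, 2]]

noncomputable def canon (i : Fin 10) : Equiv.Perm (Fin 6) :=
  Equiv.ofBijective (canonEnum i) (by revert i; decide)

def blockSwap : Equiv.Perm (Fin 6) := Equiv.addRight 3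

lemma isTriplePerm_blockSwap : IsTriplePerm blockSwap :=
  isTriplePerm_iff.2 <| Or.inr fun x => by
    simp only [mem_triple_zero, not_lt]
    revert x; decide

lemma initSeg_canon_eq_of_profile_eq : ∀ i j : Fin 10, ∀ t ∈ Finset.Icc 1 5,
    profile (canon i) t = profile (canon j) t → initSeg (canon i) t = initSeg (canon j) t := by
  simp only [initSeg, Finset.coe_inj]
  decide +kernel

lemma image_blockSwap_initSeg_canon : ∀ i j : Fin 10, ∀ t ∈ Finset.Icc 1 5,
    profile (canon i) t + profile (canon j) t = t →
      ⇑blockSwap '' initSeg (canon i) t = initSeg (canon j) t := by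
  simp only [initSeg, ← Finset.coe_image, Finset.coe_inj]
  decide +kernel

lemma orbEq_initSeg_canon {i j : Fin 10} {T : Finset ℕ} (hT : ↑T ⊆ Set.Icc 1 5)
    (h : ProfilesAgreeOn (canon i) (canon j) T) :
    OrbEq (initSeg (canon i) '' ↑T) (initSeg (canon j) '' ↑T) := by
  have hT' : ∀ t ∈ T, t ∈ Finset.Icc 1 5 := fun t ht => by simpa using hT ht
  rcases h with h | h
  · rw [Set.image_congr fun t ht => initSeg_canon_eq_of_profile_eq i j t (hT' t ht) (h t ht)]
    exact .refl _
  · refine ⟨blockSwap, isTriplePerm_blockSwap, ?_⟩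
    rw [Set.image_image]
    exact Set.image_congr fun t ht => image_blockSwap_initSeg_canon i j t (hT' t ht) (h t ht)

lemma isFaceOf_initSeg_canon_iff {i j : Fin 10} {T : Finset ℕ} (hT : ↑T ⊆ Set.Icc 1 5) :
    IsFaceOf (initSeg (canon i) '' ↑T) (flag (canon j)) ↔
      ProfilesAgreeOn (canon j) (canon i) T := by
  rw [IsFaceOf, rankSet_image_initSeg _ hT, restrict_flag _ hT]
  exact ⟨ProfilesAgreeOn.of_orbEq hT, orbEq_initSeg_canon hT⟩

lemma exists_canon_of_card_eq_three : ∀ s : Finset (Fin 6), s.card = 3 → ∃ i : Fin 10,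
    (∀ k, k ∈ s ↔ (canon i k).1 < 3) ∨ (∀ k, k ∈ s ↔ ¬ (canon i k).1 < 3) := by
  decide +kernel

lemma MaxChain.exists_orbEq_canon {c : Set (Set (Fin 6))} (hc : MaxChain c) :
    ∃ i, OrbEq (flag (canon i)) c := by
  obtain ⟨e, rfl⟩ := hc.exists_eq_flag
  have hcard : (Finset.univ.filter fun k => (e k).1 < 3).card = 3 := by
    rw [← Fintype.card_subtype,
      Fintype.card_congr (e.subtypeEquiv (q := fun x => x.1 < 3) fun _ => Iff.rfl),
      Fintype.card_subtype]
    rfl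
  obtain ⟨i, hi⟩ := exists_canon_of_card_eq_three _ hcard
  refine ⟨i, orbEq_flag_of_forall_mem_iff ?_⟩
  simp only [Finset.mem_filter, Finset.mem_univ, true_and] at hi
  simp only [mem_triple_zero]
  exact hi.imp (fun h k => (h k).symm) fun h k => by rw [h k, not_not]

lemma eq_of_orbEq_flag_canon {i j : Fin 10} (h : OrbEq (flag (canon i)) (flag (canon j))) :
    i = j := by
  have hagree : ProfilesAgreeOn (canon i) (canon j) (Finset.Icc 1 5) :=
    .of_orbEq (by simp) (by simpa [flag] using h)
  clear h
  revert i j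
  decide +kernel

/-! ### Orderings of a finite set satisfying a step condition -/

section AdmissibleSets

variable {ι κ : Type*} [Fintype ι] [LinearOrder κ] {φ : ι → κ}

def predecessors (φ : ι → κ) (i : ι) : Finset ι :=
  Finset.univ.filter fun j => φ j < φ i

@[simp]
lemma mem_predecessors {i j : ι} : j ∈ predecessors φ i ↔ φ j < φ i := by
  simp [predecessors]

variable [DecidableEq ι] (step : Finset ι → ι → Prop) [∀ E i, Decidable (step E i)]

/-- The `n`-element sets that can be listed so that each element satisfies `step` relative to
the set of elements listed before it. -/
def admissibleSets : ℕ → Finset (Finset ι)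
  | 0 => {∅}
  | n + 1 => (admissibleSets n).biUnion fun E =>
      (Finset.univ.filter fun i => i ∉ E ∧ step E i).image (insert · E)

lemma empty_mem_admissibleSets_zero : ∅ ∈ admissibleSets step 0 :=
  Finset.mem_singleton_self _

lemma insert_mem_admissibleSets {E : Finset ι} {n : ℕ} {i : ι}
    (hE : E ∈ admissibleSets step n) (hi : i ∉ E) (h : step E i) :
    insert i E ∈ admissibleSets step (n + 1) :=
  Finset.mem_biUnion.2 ⟨E, hE, Finset.mem_image.2 ⟨i, by simp [hi, h], rfl⟩⟩

/- Otherwise elaboration may try to evaluate the search; `decide +kernel` still can. -/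
attribute [irreducible] admissibleSets

variable {step}

lemma predecessors_mem_admissibleSets (hφ : Function.Injective φ)
    (h : ∀ i, step (predecessors φ i) i) (i : ι) :
    predecessors φ i ∈ admissibleSets step (predecessors φ i).card := by
  set P := predecessors φ
  suffices ∀ n i, (P i).card = n → P i ∈ admissibleSets step n from this _ i rfl
  intro n
  induction n using Nat.strong_induction_on with
  | _ n ih =>
  intro i hn
  rcases (P i).eq_empty_or_nonempty with hempty | hne
  · rw [← hn, hempty]
    exact empty_mem_admissibleSets_zero step
  obtain ⟨i', hi', hmax⟩ := (P i).exists_max_image φ hne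
  have hi'i : φ i' < φ i := mem_predecessors.1 hi'
  have hPi : P i = insert i' (P i') := by
    ext j
    simp only [P, Finset.mem_insert, mem_predecessors]
    refine ⟨fun hj => ?_, ?_⟩
    · rcases (hmax j (mem_predecessors.2 hj)).lt_or_eq with hlt | heq
      exacts [Or.inr hlt, Or.inl (hφ heq)]
    · rintro (rfl | hj)
      exacts [hi'i, hj.trans hi'i]
  have hnot : i' ∉ P i' := by simp [P]
  rw [hPi, Finset.card_insert_of_notMem hnot] at hn
  rw [hPi, ← hn]
  exact insert_mem_admissibleSets step (ih _ (by omega) i' rfl) hnot (h i')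

lemma univ_mem_admissibleSets [Nonempty ι] (hφ : Function.Injective φ)
    (h : ∀ i, step (predecessors φ i) i) :
    Finset.univ ∈ admissibleSets step (Fintype.card ι) := by
  obtain ⟨i, -, hmax⟩ := Finset.univ.exists_max_image φ Finset.univ_nonempty
  have huniv : insert i (predecessors φ i) = Finset.univ := by
    ext j
    simp only [Finset.mem_insert, mem_predecessors, Finset.mem_univ, iff_true]
    rcases (hmax j (Finset.mem_univ j)).lt_or_eq with hlt | heq
    exacts [Or.inr hlt, Or.inl (hφ heq)]
  have hnot : i ∉ predecessors φ i := by simp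
  have hmem := insert_mem_admissibleSets step (predecessors_mem_admissibleSets hφ h i) hnot (h i)
  rwa [← Finset.card_insert_of_notMem hnot, huniv, Finset.card_univ] at hmem

end AdmissibleSets

/-! ### The shelling condition in terms of profiles -/

def IsShelling {r : ℕ} (F : Fin r → Set (Set (Fin 6))) : Prop :=
  ∀ (l : Fin r) (σ : Set (Set (Fin 6))), ProperChain σ →
    (∃ k, k < l ∧ IsFaceOf σ (F l) ∧ IsFaceOf σ (F k)) →
    ∃ T' : Finset ℕ, ↑T' ⊆ Set.Icc 1 5 ∧ T'.card = 4 ∧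
      rankSet σ ⊆ ↑T' ∧
      ∃ k', k' < l ∧ IsFaceOf (restrict (F l) ↑T') (F k')

/-- The shelling condition for the facet `flag (f i)` preceded by the facets `flag (f j)`,
`j ∈ E`, read off from profiles. -/
def ShellStep {ι : Type*} (f : ι → Equiv.Perm (Fin 6)) (E : Finset ι) (i : ι) : Prop :=
  ∀ T ⊆ Finset.Icc 1 5, (∃ j ∈ E, ProfilesAgreeOn (f j) (f i) T) →
    ∃ T' ⊆ Finset.Icc 1 5, T ⊆ T' ∧ T'.card = 4 ∧
      ∃ j ∈ E, ProfilesAgreeOn (f j) (f i) T'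

instance {ι : Type*} (f : ι → Equiv.Perm (Fin 6)) (E : Finset ι) (i : ι) :
    Decidable (ShellStep f E i) := by
  unfold ShellStep; infer_instance

lemma univ_notMem_admissibleSets_shellStep_canon :
    Finset.univ ∉ admissibleSets (ShellStep canon) (Fintype.card (Fin 10)) := by
  decide +kernel

lemma IsShelling.shellStep {r : ℕ} {F : Fin r → Set (Set (Fin 6))} (hF : IsShelling F)
    {φ : Fin 10 → Fin r} (hφ : ∀ i, OrbEq (F (φ i)) (flag (canon i)))
    (hsurj : Function.Surjective φ) (i : Fin 10) :
    ShellStep canon (predecessors φ i) i := by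
  rintro T hT ⟨j, hj, hji⟩
  have hTs : (↑T : Set ℕ) ⊆ Set.Icc 1 5 := by simpa [← Finset.coe_Icc] using hT
  set σ := initSeg (canon i) '' ↑T
  have hface : ∀ k, ProfilesAgreeOn (canon k) (canon i) T → IsFaceOf σ (F (φ k)) :=
    fun k hk => (isFaceOf_congr (.refl σ) (hφ k)).2 ((isFaceOf_initSeg_canon_iff hTs).2 hk)
  obtain ⟨T', hT's, hT'4, hTT', k, hk, hk_face⟩ :=
    hF (φ i) σ ((maxChain_flag (canon i)).1.mono (Set.image_mono hTs))
      ⟨φ j, mem_predecessors.1 hj, hface i (Or.inl fun _ _ => rfl), hface j hji⟩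
  obtain ⟨j', rfl⟩ := hsurj k
  rw [rankSet_image_initSeg _ hTs, Finset.coe_subset] at hTT'
  refine ⟨T', by simpa [← Finset.coe_Icc] using hT's, hTT', hT'4, j', mem_predecessors.2 hk,
    ?_⟩
  rw [← isFaceOf_initSeg_canon_iff hT's, ← restrict_flag _ hT's]
  exact (isFaceOf_congr ((hφ i).restrict _) (hφ j')).1 hk_face

theorem quotient_complex_not_shellable :
    ¬ ∃ (r : ℕ) (F : Fin r → Set (Set (Fin 6))),
        (∀ l, MaxChain (F l)) ∧
        (∀ d, MaxChain d → ∃! l, OrbEq (F l) d) ∧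
        (∀ (l : Fin r) (σ : Set (Set (Fin 6))), ProperChain σ →
          (∃ k, k < l ∧ IsFaceOf σ (F l) ∧ IsFaceOf σ (F k)) →
          ∃ T' : Finset ℕ, ↑T' ⊆ Set.Icc 1 5 ∧ T'.card = 4 ∧
            rankSet σ ⊆ ↑T' ∧
            ∃ k', k' < l ∧ IsFaceOf (restrict (F l) ↑T') (F k')) := by
  rintro ⟨r, F, hmax, huniq, hshell⟩
  choose φ hφ hφ_unique using fun i => huniq _ (maxChain_flag (canon i))
  have hinj : Function.Injective φ := fun i j hij =>
    eq_of_orbEq_flag_canon ((hφ i).symm.trans (by rw [hij]; exact hφ j))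
  have hsurj : Function.Surjective φ := fun l => by
    obtain ⟨i, hi⟩ := (hmax l).exists_orbEq_canon
    exact ⟨i, (hφ_unique i l hi.symm).symm⟩
  exact univ_notMem_admissibleSets_shellStep_canon
    (univ_mem_admissibleSets hinj (IsShelling.shellStep hshell hφ hsurj))
end Stmt4
end
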